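/- (Lemma 4) The only even survivor is 2: if n is an even positive integer and n is a survivor, then n = 2. -/

import Mathlib

/-- Sum of the distinct prime divisors of `n`. -/
def primeSum (n : ℕ) : ℕ := ∑ p ∈ n.primeFactors, p

/-- Sum of the positive divisors of `n` which are not prime (including `1`,
and including `n` itself whenever `n` is not prime). -/
def compositeSum (n : ℕ) : ℕ := ∑ d ∈ n.divisors.filter (fun d => ¬ d.Prime), d

/-- The map `X(n) = Π(n) − C(n) + n`, regarded as an integer. -/
def X (n : ℕ) : ℤ := (primeSum n : ℤ) - (compositeSum n : ℤ) + n

/-- `n` is a survivor if there is a sequence of positive integers starting at `n`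
whose successive terms are given by `X`; i.e., all iterates of `X` from `n` stay positive. -/
def Survivor (n : ℕ) : Prop :=
  ∃ a : ℕ → ℕ, a 0 = n ∧ (∀ i, 0 < a i) ∧ ∀ i, (a (i + 1) : ℤ) = X (a i)

/-!
Write `n = 2m`. If `m` is an odd prime then `X(2m) = m + 1` is again even and smaller than `n`,
so we descend; `X(4) = 1` and `X(1) = 0` rule out `n = 4`. If `m > 2` is not prime, then
`Π(2m) ≤ 2 + m` is outweighed by the non-prime divisors `1, m, 2m` of `2m` (together with `2q`,
`q` the least prime factor of `m`, when `m` is odd), so `X(2m) < 0`.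
-/

lemma Survivor.pos {n : ℕ} (h : Survivor n) : 0 < n := by
  obtain ⟨a, rfl, hpos, -⟩ := h
  exact hpos 0

lemma Survivor.step {n : ℕ} (h : Survivor n) : ∃ k : ℕ, (k : ℤ) = X n ∧ Survivor k := by
  obtain ⟨a, rfl, hpos, hstep⟩ := h
  exact ⟨a 1, hstep 0, fun i => a (i + 1), rfl, fun i => hpos _, fun i => hstep _⟩

lemma Nat.divisors_filter_prime (n : ℕ) : n.divisors.filter Nat.Prime = n.primeFactors := by
  ext p
  simp only [Finset.mem_filter, Nat.mem_divisors, Nat.mem_primeFactors]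
  tauto

lemma X_eq_two_mul_primeSum_sub (n : ℕ) : X n = 2 * primeSum n - ∑ d ∈ n.divisors, d + n := by
  rw [X, ← Finset.sum_filter_add_sum_filter_not n.divisors Nat.Prime, Nat.divisors_filter_prime,
    primeSum, compositeSum]
  push_cast
  ring

lemma X_one : X 1 = 0 := by
  simp [X_eq_two_mul_primeSum_sub, primeSum]

lemma X_prime_sq {p : ℕ} (hp : p.Prime) : X (p ^ 2) = p - 1 := by
  rw [X_eq_two_mul_primeSum_sub, primeSum, Nat.primeFactors_prime_pow two_ne_zero hp,
    Nat.sum_divisors_prime_pow hp]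
  simp only [Finset.sum_singleton, Finset.sum_range_succ, Finset.sum_range_zero]
  push_cast
  ring

lemma X_mul_of_prime_ne {p q : ℕ} (hp : p.Prime) (hq : q.Prime) (hpq : p ≠ q) :
    X (p * q) = p + q - 1 := by
  have hcop : p.Coprime q := (Nat.coprime_primes hp hq).mpr hpq
  rw [X_eq_two_mul_primeSum_sub, primeSum, Nat.primeFactors_mul hp.ne_zero hq.ne_zero,
    hp.primeFactors, hq.primeFactors, Finset.sum_union (Finset.disjoint_singleton.mpr hpq),
    Nat.Coprime.sum_divisors_mul hcop, Nat.Prime.sum_divisors hp, Nat.Prime.sum_divisors hq]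
  simp only [Finset.sum_singleton]
  push_cast
  ring

lemma primeSum_mul_le {a b : ℕ} (ha : a ≠ 0) (hb : b ≠ 0) :
    primeSum (a * b) ≤ primeSum a + primeSum b := by
  classical
  rw [primeSum, primeSum, primeSum, Nat.primeFactors_mul ha hb,
    ← Finset.sum_union_inter (s₁ := a.primeFactors)]
  exact Nat.le_add_right _ _

lemma primeSum_prime {p : ℕ} (hp : p.Prime) : primeSum p = p := by
  rw [primeSum, hp.primeFactors, Finset.sum_singleton]

lemma primeSum_le_self (n : ℕ) : primeSum n ≤ n := by
  induction n using induction_on_primes with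
  | zero => simp [primeSum]
  | one => simp [primeSum]
  | prime_mul p a hp ih =>
    rcases Nat.lt_or_ge a 2 with ha | ha
    · interval_cases a
      · simp [primeSum]
      · rw [mul_one, primeSum_prime hp]
    · calc primeSum (p * a) ≤ primeSum p + primeSum a := primeSum_mul_le hp.ne_zero (by omega)
        _ ≤ p + a := by rw [primeSum_prime hp]; omega
        _ ≤ p * a := by nlinarith [hp.two_le]

lemma primeSum_mul_of_dvd {a b : ℕ} (hab : a ∣ b) (hb : b ≠ 0) :
    primeSum (a * b) = primeSum b := by
  rw [primeSum, primeSum, Nat.primeFactors_mul (ne_zero_of_dvd_ne_zero hb hab) hb,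
    Finset.union_eq_right.mpr (Nat.primeFactors_mono hab hb)]

lemma sum_le_compositeSum {n : ℕ} (hn : n ≠ 0) {B : Finset ℕ}
    (hB : ∀ d ∈ B, d ∣ n ∧ ¬ d.Prime) : ∑ d ∈ B, d ≤ compositeSum n :=
  Finset.sum_le_sum_of_subset fun d hd => by
    simpa [Nat.mem_divisors, hn] using hB d hd

lemma X_two_mul_neg_of_even {m : ℕ} (hm : 2 < m) (hmp : ¬ m.Prime) (heven : Even m) :
    X (2 * m) < 0 := by
  have hP : primeSum (2 * m) ≤ m :=
    (primeSum_mul_of_dvd heven.two_dvd (by omega)).le.trans (primeSum_le_self m)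
  have hC : 1 + m + 2 * m ≤ compositeSum (2 * m) := by
    have := sum_le_compositeSum (n := 2 * m) (by omega) (B := {1, m, 2 * m}) (by
      simp only [Finset.mem_insert, Finset.mem_singleton]
      rintro d (rfl | rfl | rfl)
      exacts [⟨one_dvd _, Nat.not_prime_one⟩, ⟨dvd_mul_left _ _, hmp⟩,
        ⟨dvd_rfl, Nat.not_prime_mul (by norm_num) (by omega)⟩])
    rwa [Finset.sum_insert (by simp; omega), Finset.sum_pair (by omega), ← add_assoc] at this
  rw [X]
  omega

lemma X_two_mul_neg_of_odd {m : ℕ} (hm : 2 < m) (hmp : ¬ m.Prime) (hodd : Odd m) :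
    X (2 * m) < 0 := by
  set q := m.minFac
  have hqm : q ∣ m := Nat.minFac_dvd m
  have hq2 : 2 ≤ q := (Nat.minFac_prime (by omega)).two_le
  have hq_ne : q ≠ m := fun h => hmp (Nat.prime_def_minFac.mpr ⟨by omega, h⟩)
  have h2q_ne : 2 * q ≠ m := fun h => Nat.not_even_iff_odd.mpr hodd ⟨q, by omega⟩
  have hP : primeSum (2 * m) ≤ 2 + m := by
    have := primeSum_mul_le two_ne_zero (show m ≠ 0 by omega)
    rw [primeSum_prime Nat.prime_two] at this
    linarith [primeSum_le_self m]
  have hC : 1 + m + 2 * q + 2 * m ≤ compositeSum (2 * m) := by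
    have := sum_le_compositeSum (n := 2 * m) (by omega) (B := {1, m, 2 * q, 2 * m}) (by
      simp only [Finset.mem_insert, Finset.mem_singleton]
      rintro d (rfl | rfl | rfl | rfl)
      exacts [⟨one_dvd _, Nat.not_prime_one⟩, ⟨dvd_mul_left _ _, hmp⟩,
        ⟨mul_dvd_mul_left 2 hqm, Nat.not_prime_mul (by norm_num) (by omega)⟩,
        ⟨dvd_rfl, Nat.not_prime_mul (by norm_num) (by omega)⟩])
    rwa [Finset.sum_insert (by simp; omega), Finset.sum_insert (by simp; omega),
      Finset.sum_pair (by omega), ← add_assoc, ← add_assoc] at this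
  rw [X]
  omega

theorem even_survivor_eq_two_general (n : ℕ) (heven : Even n)
    (hsurv : Survivor n) : n = 2 := by
  induction n using Nat.strong_induction_on with
  | _ n ih =>
  obtain ⟨m, rfl⟩ := even_iff_two_dvd.mp heven
  obtain ⟨k, hkX, hk⟩ := hsurv.step
  have hm0 := hsurv.pos
  rcases (show m = 1 ∨ m = 2 ∨ 2 < m by omega) with rfl | rfl | hm
  · rfl
  · have hk1 : k = 1 := by
      rw [← sq, X_prime_sq Nat.prime_two] at hkX
      omega
    subst hk1
    obtain ⟨j, hjX, hj⟩ := hk.step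
    have := hj.pos
    rw [X_one] at hjX
    omega
  · by_cases hmp : m.Prime
    · rw [mul_comm, X_mul_of_prime_ne hmp Nat.prime_two (by omega)] at hkX
      have hk_even : Even k := by
        have : k = m + 1 := by omega
        exact this ▸ (hmp.odd_of_ne_two (by omega)).add_one
      have := ih k (by omega) hk_even hk
      omega
    · have := (Nat.even_or_odd m).elim (X_two_mul_neg_of_even hm hmp)
        (X_two_mul_neg_of_odd hm hmp)
      omega

theorem even_survivor_eq_two (n : ℕ) (hn : 0 < n) (heven : Even n)
    (hsurv : Survivor n) : n = 2 :=
  even_survivor_eq_two_general n heven hsurv
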